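/- Suppose P({ξ ∈ Ω : ξ is strictly increasing}) > 1 − δ, where 0 ≤ δ < α ≤ 1/2 and δ < γ ≤ 1. Then 𝒢(α,0,γ) consists of all of Fin L, the global statement G(α,0,γ) equals the ordering event {ξ ∈ Ω : ξ is strictly increasing}, and P(G(α,0,γ)) > 1 − δ. (That is, when the posterior concentrates on a strict ordering, the optimal global statement with zero local and global errors asserts exactly that ordering.) -/

import Mathlib

open MeasureTheory Set

/-- Elementary statement: parameter `l` is ordered higher than `l'`. -/
def Elem (L : ℕ) (l l' : Fin L) : Set (Fin L → ℝ) := {ξ | ξ l' < ξ l}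

/-- Indices ordered lower than `l` with posterior probability at least `1 - α`. -/
def underA {L : ℕ} (P : Measure (Fin L → ℝ)) (α : ℝ) (l : Fin L) : Set (Fin L) :=
  {l' | (P (Elem L l l')).toReal > 1 - α}

/-- Indices ordered higher than `l` with posterior probability at least `1 - α`. -/
def overA {L : ℕ} (P : Measure (Fin L → ℝ)) (α : ℝ) (l : Fin L) : Set (Fin L) :=
  {l' | (P (Elem L l' l)).toReal > 1 - α}

/-- Local statement `A(l, α)`. -/
def locA {L : ℕ} (P : Measure (Fin L → ℝ)) (α : ℝ) (l : Fin L) : Set (Fin L → ℝ) :=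
  (⋂ l' ∈ underA P α l, Elem L l l') ∩ (⋂ l' ∈ overA P α l, Elem L l' l)

/-- Local statement with local error `t`, `A(l, α, t)`. -/
def locAt {L : ℕ} (P : Measure (Fin L → ℝ)) (α t : ℝ) (l : Fin L) : Set (Fin L → ℝ) :=
  ⋃ (u : Set (Fin L)) (v : Set (Fin L)) (_ : u ⊆ underA P α l) (_ : v ⊆ overA P α l)
    (_ : (1 - t) * ((underA P α l ∪ overA P α l).ncard : ℝ) ≤ (u.ncard : ℝ) + (v.ncard : ℝ)),
    (⋂ l' ∈ u, Elem L l l') ∩ (⋂ l' ∈ v, Elem L l' l)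

/-- Indices whose local statements have posterior probability at least `1 - γ`. -/
def GsetI {L : ℕ} (P : Measure (Fin L → ℝ)) (α t γ : ℝ) : Set (Fin L) :=
  {l | (P (locAt P α t l)).toReal ≥ 1 - γ}

/-- Global statement `G(α, t, γ)`. -/
def globG {L : ℕ} (P : Measure (Fin L → ℝ)) (α t γ : ℝ) : Set (Fin L → ℝ) :=
  ⋂ l ∈ GsetI P α t γ, locAt P α t l

/-- Global statement with global error `q`, `G(α, t, γ, q)`. -/
def globGq {L : ℕ} (P : Measure (Fin L → ℝ)) (α t γ q : ℝ) : Set (Fin L → ℝ) :=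
  ⋃ (G : Set (Fin L)) (_ : G ⊆ GsetI P α t γ)
    (_ : (1 - q) * ((GsetI P α t γ).ncard : ℝ) ≤ (G.ncard : ℝ)),
    ⋂ l ∈ G, locAt P α t l

/-! Concentration of the posterior on the increasing orderings makes every comparison `l' < l`
hold with probability above `1 - δ > 1 - α`, while the reverse comparisons, being disjoint from
these, have probability below `δ ≤ 1 - α`. Hence `underA` and `overA` are exactly the indices
below and above `l`; they are disjoint, so with zero local error the only admissible choice is
`(underA, overA)` itself, and the local statements are the comparisons of `ξ l` with all other
coordinates. Each contains the ordering event, and their intersection is that event. -/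

section Elementary

variable {L : ℕ}

theorem measurableSet_elem (l l' : Fin L) : MeasurableSet (Elem L l l') :=
  measurableSet_lt (measurable_pi_apply l') (measurable_pi_apply l)

theorem disjoint_elem_swap (l l' : Fin L) : Disjoint (Elem L l l') (Elem L l' l) :=
  Set.disjoint_left.2 fun ξ (h : ξ l' < ξ l) h' => lt_asymm h h'

theorem elem_self (l : Fin L) : Elem L l l = ∅ :=
  Set.eq_empty_of_forall_notMem fun ξ h => lt_irrefl (ξ l) h

theorem setOf_strictMono_subset_elem {l l' : Fin L} (h : l' < l) :
    {ξ : Fin L → ℝ | StrictMono ξ} ⊆ Elem L l l' :=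
  fun _ hξ => hξ h

theorem toReal_elem_add_toReal_elem_swap_le_one (P : Measure (Fin L → ℝ))
    [IsProbabilityMeasure P] (l l' : Fin L) :
    (P (Elem L l l')).toReal + (P (Elem L l' l)).toReal ≤ 1 := by
  rw [← measureReal_def, ← measureReal_def,
    ← measureReal_union (disjoint_elem_swap l l') (measurableSet_elem l' l)]
  exact measureReal_le_one

end Elementary

theorem Set.eq_and_eq_of_ncard_union_le {α : Type*} {s t u v : Set α} (hs : s ⊆ u) (ht : t ⊆ v)
    (huv : Disjoint u v) (hu : u.Finite) (hv : v.Finite) (h : (u ∪ v).ncard ≤ s.ncard + t.ncard) :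
    s = u ∧ t = v := by
  have hsu := Set.ncard_le_ncard hs hu
  have htv := Set.ncard_le_ncard ht hv
  rw [Set.ncard_union_eq huv hu hv] at h
  exact ⟨Set.eq_of_subset_of_ncard_le hs (by omega) hu, Set.eq_of_subset_of_ncard_le ht (by omega) hv⟩

section LocalStatements

variable {L : ℕ} (P : Measure (Fin L → ℝ)) {α : ℝ}

theorem disjoint_underA_overA [IsProbabilityMeasure P] (hα : α ≤ 1 / 2) (l : Fin L) :
    Disjoint (underA P α l) (overA P α l) :=
  Set.disjoint_left.2 fun l' hu ho => by
    have := toReal_elem_add_toReal_elem_swap_le_one P l l'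
    simp only [underA, overA, Set.mem_ofPred_eq] at hu ho
    linarith

theorem locAt_zero_eq_locA {l : Fin L} (h : Disjoint (underA P α l) (overA P α l)) :
    locAt P α 0 l = locA P α l := by
  ext ξ
  simp only [locAt, locA, Set.mem_iUnion, exists_prop, sub_zero, one_mul]
  constructor
  · rintro ⟨u, v, hu, hv, hcard, hξ⟩
    obtain ⟨rfl, rfl⟩ := Set.eq_and_eq_of_ncard_union_le hu hv h (Set.toFinite _)
      (Set.toFinite _) (by exact_mod_cast hcard)
    exact hξ
  · intro hξ
    exact ⟨_, _, subset_rfl, subset_rfl, by exact_mod_cast Set.ncard_union_le _ _, hξ⟩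

variable [IsProbabilityMeasure P] {δ : ℝ} (hconc : (P {ξ : Fin L → ℝ | StrictMono ξ}).toReal > 1 - δ)
include hconc

theorem lt_toReal_elem_of_lt {l l' : Fin L} (h : l' < l) : 1 - δ < (P (Elem L l l')).toReal :=
  hconc.trans_le <| ENNReal.toReal_mono (measure_ne_top P _)
    (measure_mono (setOf_strictMono_subset_elem h))

theorem underA_eq_Iio (hδα : δ < α) (hα : α ≤ 1 / 2) (l : Fin L) :
    underA P α l = Set.Iio l := by
  ext l'
  simp only [underA, Set.mem_ofPred_eq, Set.mem_Iio]
  refine ⟨fun h => ?_, fun h => by linarith [lt_toReal_elem_of_lt P hconc h]⟩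
  rcases lt_trichotomy l' l with hlt | rfl | hgt
  · exact hlt
  · simp only [elem_self, measure_empty, ENNReal.toReal_zero] at h
    linarith
  · linarith [lt_toReal_elem_of_lt P hconc hgt, toReal_elem_add_toReal_elem_swap_le_one P l l']

theorem overA_eq_Ioi (hδα : δ < α) (hα : α ≤ 1 / 2) (l : Fin L) :
    overA P α l = Set.Ioi l := by
  ext l'
  exact Set.ext_iff.1 (underA_eq_Iio P hconc hδα hα l') l

theorem iInter_locA_eq_setOf_strictMono (hδα : δ < α) (hα : α ≤ 1 / 2) :
    ⋂ l, locA P α l = {ξ : Fin L → ℝ | StrictMono ξ} := by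
  ext ξ
  simp only [locA, underA_eq_Iio P hconc hδα hα, overA_eq_Ioi P hconc hδα hα, Set.mem_iInter,
    Set.mem_inter_iff, Set.mem_Iio, Set.mem_Ioi, Set.mem_ofPred_eq, _root_.Elem]
  exact ⟨fun h _ _ hab => (h _).2 _ hab, fun h l => ⟨fun _ hl => h hl, fun _ hl => h hl⟩⟩

end LocalStatements

theorem stmt_16_general (L : ℕ) (P : Measure (Fin L → ℝ)) [IsProbabilityMeasure P]
    (δ α γ : ℝ) (hδα : δ < α) (hα : α ≤ 1 / 2) (hδγ : δ < γ)
    (hconc : (P {ξ : Fin L → ℝ | StrictMono ξ}).toReal > 1 - δ) :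
    GsetI P α 0 γ = Set.univ ∧
    globG P α 0 γ = {ξ : Fin L → ℝ | StrictMono ξ} ∧
    (P (globG P α 0 γ)).toReal > 1 - δ := by
  have hloc : ∀ l, locAt P α 0 l = locA P α l :=
    fun l => locAt_zero_eq_locA P (disjoint_underA_overA P hα l)
  have hsub : ∀ l, {ξ : Fin L → ℝ | StrictMono ξ} ⊆ locAt P α 0 l := fun l => by
    rw [hloc, ← iInter_locA_eq_setOf_strictMono P hconc hδα hα]
    exact Set.iInter_subset _ l
  have hG : GsetI P α 0 γ = Set.univ := Set.eq_univ_of_forall fun l => by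
    have := ENNReal.toReal_mono (measure_ne_top P _) (measure_mono (hsub l))
    simp only [GsetI, Set.mem_ofPred_eq]
    linarith
  have hglob : globG P α 0 γ = {ξ : Fin L → ℝ | StrictMono ξ} := by
    simp only [globG, hG, Set.mem_univ, Set.iInter_true, hloc]
    exact iInter_locA_eq_setOf_strictMono P hconc hδα hα
  exact ⟨hG, hglob, hglob ▸ hconc⟩

theorem stmt_16 (L : ℕ) (hL : 1 ≤ L) (P : Measure (Fin L → ℝ)) [IsProbabilityMeasure P]
    (δ α γ : ℝ) (hδ0 : 0 ≤ δ) (hδα : δ < α) (hα : α ≤ 1 / 2) (hδγ : δ < γ) (hγ1 : γ ≤ 1)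
    (hconc : (P {ξ : Fin L → ℝ | StrictMono ξ}).toReal > 1 - δ) :
    GsetI P α 0 γ = Set.univ ∧
    globG P α 0 γ = {ξ : Fin L → ℝ | StrictMono ξ} ∧
    (P (globG P α 0 γ)).toReal > 1 - δ :=
  stmt_16_general L P δ α γ hδα hα hδγ hconc
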